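/- Let m ≥ 1, A, B ∈ ℝ^{m×m} and C ∈ ℂ^{m×m} with λ⁻(A) > 0, λ⁻(C) > 0 and |B − Bᵀ|² < 16 λ⁻(A) λ⁻(C). Then for every ω ∈ ℝ the matrix −ω² A + iω B − C ∈ ℂ^{m×m} is invertible. -/

import Mathlib

open Matrix

/-- The lower spectral bound `λ⁻(A) = min { Re (xᴴ A x) : |x| = 1 }` of a complex matrix,
where `|x|` is the Euclidean norm. -/
noncomputable def lowerSpectralBound {m : ℕ} (A : Matrix (Fin m) (Fin m) ℂ) : ℝ :=
  sInf { r : ℝ | ∃ x : Fin m → ℂ,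
    (∑ i, Complex.normSq (x i)) = 1 ∧ r = (dotProduct (star x) (A.mulVec x)).re }

/-- The operator (spectral) norm of a real matrix with respect to the Euclidean norm. -/
noncomputable def euclideanOpNorm {m : ℕ} (B : Matrix (Fin m) (Fin m) ℝ) : ℝ :=
  sSup { r : ℝ | ∃ x : Fin m → ℝ,
    (∑ i, (x i) ^ 2) = 1 ∧ r = Real.sqrt (∑ i, (B.mulVec x i) ^ 2) }

/-!
For `x ≠ 0` put `a = Re (xᴴ A x)`, `b = Im (xᴴ B x)`, `c = Re (xᴴ C x)`, so that
`Re (xᴴ (−ω² A + iω B − C) x) = −(a ω² + b ω + c)`. Writing `x = u + i v`, reality of `B` gives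
`b = uᵀ (B − Bᵀ) v`, and Cauchy–Schwarz with `|u| |v| ≤ |x|² / 2` yields
`b² ≤ |B − Bᵀ|² |x|⁴ / 4 < 4 λ⁻(A) λ⁻(C) |x|⁴ ≤ 4 a c`. So the quadratic `a ω² + b ω + c` has
negative discriminant and never vanishes: the matrix has trivial kernel.
-/

lemma quadratic_pos_of_sq_lt {a b c : ℝ} (ha : 0 < a) (h : b ^ 2 < 4 * a * c) (ω : ℝ) :
    0 < a * ω ^ 2 + b * ω + c := by
  nlinarith [sq_nonneg (2 * a * ω + b)]

lemma exists_smul_eq_one_of_homogeneous {E : Type*} [AddCommGroup E] [Module ℝ E]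
    {f g : E → ℝ} (hf : ∀ (t : ℝ) x, f (t • x) = t ^ 2 * f x)
    (hg : ∀ (t : ℝ) x, g (t • x) = t ^ 2 * g x) {x : E} (hx : 0 < g x) :
    ∃ t : ℝ, g (t • x) = 1 ∧ f (t • x) = f x / g x := by
  have ht : (√(g x))⁻¹ ^ 2 = (g x)⁻¹ := by rw [inv_pow, Real.sq_sqrt hx.le]
  refine ⟨(√(g x))⁻¹, ?_, ?_⟩
  · rw [hg, ht, inv_mul_cancel₀ hx.ne']
  · rw [hf, ht, inv_mul_eq_div]

section Fintype

variable {ι : Type*} [Fintype ι]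

lemma isCompact_setOf_sum_norm_sq_eq_one {𝕜 : Type*} [RCLike 𝕜] :
    IsCompact {x : ι → 𝕜 | ∑ i, ‖x i‖ ^ 2 = 1} := by
  refine Metric.isCompact_of_isClosed_isBounded
    (isClosed_eq (by fun_prop) continuous_const) ?_
  refine (Metric.isBounded_closedBall (x := 0) (r := 1)).subset fun x hx => ?_
  rw [mem_closedBall_zero_iff, pi_norm_le_iff_of_nonneg zero_le_one]
  intro i
  have : ‖x i‖ ^ 2 ≤ 1 :=
    hx ▸ Finset.single_le_sum (fun j _ => sq_nonneg ‖x j‖) (Finset.mem_univ i)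
  nlinarith [norm_nonneg (x i)]

lemma re_star_dotProduct_mulVec_smul (A : Matrix ι ι ℂ) (t : ℝ) (x : ι → ℂ) :
    (star (t • x) ⬝ᵥ A *ᵥ (t • x)).re = t ^ 2 * (star x ⬝ᵥ A *ᵥ x).re := by
  rw [star_smul, mulVec_smul, dotProduct_smul, smul_dotProduct]
  simp [sq, mul_assoc]

lemma sum_normSq_smul (t : ℝ) (x : ι → ℂ) :
    ∑ i, Complex.normSq ((t • x) i) = t ^ 2 * ∑ i, Complex.normSq (x i) := by
  simp only [Pi.smul_apply, Complex.real_smul, Complex.normSq_mul, Complex.normSq_ofReal,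
    Finset.mul_sum, sq]

lemma sum_normSq_pos {x : ι → ℂ} (hx : x ≠ 0) : 0 < ∑ i, Complex.normSq (x i) := by
  obtain ⟨i, hi⟩ := Function.ne_iff.1 hx
  exact Finset.sum_pos' (fun j _ => Complex.normSq_nonneg _)
    ⟨i, Finset.mem_univ i, Complex.normSq_pos.2 hi⟩

lemma im_star_dotProduct_mulVec_map_ofReal (B : Matrix ι ι ℝ) (x : ι → ℂ) :
    (star x ⬝ᵥ B.map Complex.ofReal *ᵥ x).im
      = (fun i => (x i).re) ⬝ᵥ (B - Bᵀ) *ᵥ fun i => (x i).im := by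
  have hswap : ∑ i, ∑ j, (x i).re * (B j i * (x j).im)
      = ∑ i, ∑ j, (x i).im * (B i j * (x j).re) := by
    rw [Finset.sum_comm]
    simp only [mul_left_comm, mul_comm]
  simp only [dotProduct, mulVec, Complex.im_sum, Finset.mul_sum, Pi.star_apply, Matrix.sub_apply,
    transpose_apply, map_apply, sub_mul, mul_sub, Finset.sum_sub_distrib, hswap]
  simp only [← Finset.sum_sub_distrib]
  refine Finset.sum_congr rfl fun i _ => Finset.sum_congr rfl fun j _ => ?_
  simp only [RCLike.star_def, Complex.mul_im, Complex.conj_re, Complex.ofReal_re,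
    Complex.ofReal_im, zero_mul, add_zero, Complex.conj_im, Complex.mul_re, sub_zero, neg_mul]
  ring

end Fintype

section FinDim

variable {m : ℕ}

lemma bddBelow_lowerSpectralBound (A : Matrix (Fin m) (Fin m) ℂ) :
    BddBelow { r : ℝ | ∃ x : Fin m → ℂ,
      (∑ i, Complex.normSq (x i)) = 1 ∧ r = (star x ⬝ᵥ A *ᵥ x).re } := by
  have hK : IsCompact {x : Fin m → ℂ | ∑ i, Complex.normSq (x i) = 1} := by
    simpa only [Complex.normSq_eq_norm_sq] using isCompact_setOf_sum_norm_sq_eq_one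
  refine (hK.bddBelow_image (f := fun x => (star x ⬝ᵥ A *ᵥ x).re) (by fun_prop)).mono ?_
  rintro r ⟨x, hx, rfl⟩
  exact ⟨x, hx, rfl⟩

lemma bddAbove_euclideanOpNorm (B : Matrix (Fin m) (Fin m) ℝ) :
    BddAbove { r : ℝ | ∃ x : Fin m → ℝ,
      (∑ i, (x i) ^ 2) = 1 ∧ r = √(∑ i, (B *ᵥ x) i ^ 2) } := by
  have hK : IsCompact {x : Fin m → ℝ | ∑ i, x i ^ 2 = 1} := by
    have := isCompact_setOf_sum_norm_sq_eq_one (ι := Fin m) (𝕜 := ℝ)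
    simpa only [Real.norm_eq_abs, sq_abs] using this
  refine (hK.bddAbove_image (f := fun x => √(∑ i, (B *ᵥ x) i ^ 2)) (by fun_prop)).mono ?_
  rintro r ⟨x, hx, rfl⟩
  exact ⟨x, hx, rfl⟩

lemma lowerSpectralBound_le_re {A : Matrix (Fin m) (Fin m) ℂ} {x : Fin m → ℂ}
    (hx : ∑ i, Complex.normSq (x i) = 1) : lowerSpectralBound A ≤ (star x ⬝ᵥ A *ᵥ x).re :=
  csInf_le (bddBelow_lowerSpectralBound A) ⟨x, hx, rfl⟩

lemma lowerSpectralBound_mul_le_re (A : Matrix (Fin m) (Fin m) ℂ) {x : Fin m → ℂ}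
    (hx : x ≠ 0) :
    lowerSpectralBound A * ∑ i, Complex.normSq (x i) ≤ (star x ⬝ᵥ A *ᵥ x).re := by
  obtain ⟨t, ht, hre⟩ := exists_smul_eq_one_of_homogeneous
    (f := fun x => (star x ⬝ᵥ A *ᵥ x).re) (g := fun x => ∑ i, Complex.normSq (x i))
    (re_star_dotProduct_mulVec_smul A) sum_normSq_smul (sum_normSq_pos hx)
  rw [← le_div_iff₀ (sum_normSq_pos hx), ← hre]
  exact lowerSpectralBound_le_re ht

lemma sqrt_sum_sq_mulVec_le_euclideanOpNorm (B : Matrix (Fin m) (Fin m) ℝ) {x : Fin m → ℝ}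
    (hx : ∑ i, x i ^ 2 = 1) : √(∑ i, (B *ᵥ x) i ^ 2) ≤ euclideanOpNorm B :=
  le_csSup (bddAbove_euclideanOpNorm B) ⟨x, hx, rfl⟩

lemma sum_sq_mulVec_le (B : Matrix (Fin m) (Fin m) ℝ) (v : Fin m → ℝ) :
    ∑ i, (B *ᵥ v) i ^ 2 ≤ euclideanOpNorm B ^ 2 * ∑ i, v i ^ 2 := by
  rcases eq_or_ne v 0 with rfl | hv
  · simp
  have hpos : 0 < ∑ i, v i ^ 2 := by
    obtain ⟨i, hi⟩ := Function.ne_iff.1 hv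
    exact Finset.sum_pos' (fun j _ => sq_nonneg _) ⟨i, Finset.mem_univ i, sq_pos_of_ne_zero hi⟩
  obtain ⟨t, ht, hB⟩ := exists_smul_eq_one_of_homogeneous (f := fun v => ∑ i, (B *ᵥ v) i ^ 2)
    (g := fun v => ∑ i, v i ^ 2) (by simp [mulVec_smul, mul_pow, Finset.mul_sum])
    (by simp [mul_pow, Finset.mul_sum]) hpos
  have := (Real.sqrt_le_iff.1 (sqrt_sum_sq_mulVec_le_euclideanOpNorm B ht)).2
  rwa [hB, div_le_iff₀ hpos] at this

lemma sq_im_star_dotProduct_mulVec_map_ofReal_le (B : Matrix (Fin m) (Fin m) ℝ)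
    (x : Fin m → ℂ) :
    (star x ⬝ᵥ B.map Complex.ofReal *ᵥ x).im ^ 2
      ≤ euclideanOpNorm (B - Bᵀ) ^ 2 * (∑ i, Complex.normSq (x i)) ^ 2 / 4 := by
  set u : Fin m → ℝ := fun i => (x i).re
  set v : Fin m → ℝ := fun i => (x i).im
  have huv : ∑ i, Complex.normSq (x i) = ∑ i, u i ^ 2 + ∑ i, v i ^ 2 := by
    simp only [u, v, Complex.normSq_apply, ← Finset.sum_add_distrib, sq]
  have hcs : (u ⬝ᵥ (B - Bᵀ) *ᵥ v) ^ 2 ≤ (∑ i, u i ^ 2) * ∑ i, ((B - Bᵀ) *ᵥ v) i ^ 2 :=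
    Finset.sum_mul_sq_le_sq_mul_sq _ _ _
  have hK := sum_sq_mulVec_le (B - Bᵀ) v
  have hu : 0 ≤ ∑ i, u i ^ 2 := by positivity
  have hv : 0 ≤ ∑ i, v i ^ 2 := by positivity
  rw [im_star_dotProduct_mulVec_map_ofReal, huv]
  nlinarith [sq_nonneg (∑ i, u i ^ 2 - ∑ i, v i ^ 2), sq_nonneg (euclideanOpNorm (B - Bᵀ)),
    mul_le_mul_of_nonneg_left hK hu]

lemma re_star_dotProduct_mulVec_neg {A B : Matrix (Fin m) (Fin m) ℝ}
    {C : Matrix (Fin m) (Fin m) ℂ}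
    (hA : 0 < lowerSpectralBound (A.map Complex.ofReal)) (hC : 0 < lowerSpectralBound C)
    (hB : euclideanOpNorm (B - Bᵀ) ^ 2 <
      16 * lowerSpectralBound (A.map Complex.ofReal) * lowerSpectralBound C)
    (ω : ℝ) {x : Fin m → ℂ} (hx : x ≠ 0) :
    (star x ⬝ᵥ ((-(ω : ℂ) ^ 2) • A.map Complex.ofReal
      + ((ω : ℂ) * Complex.I) • B.map Complex.ofReal - C) *ᵥ x).re < 0 := by
  set s := ∑ i, Complex.normSq (x i)
  set a := (star x ⬝ᵥ A.map Complex.ofReal *ᵥ x).re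
  set b := (star x ⬝ᵥ B.map Complex.ofReal *ᵥ x).im
  set c := (star x ⬝ᵥ C *ᵥ x).re
  have hs : 0 < s := sum_normSq_pos hx
  have ha : lowerSpectralBound (A.map Complex.ofReal) * s ≤ a :=
    lowerSpectralBound_mul_le_re _ hx
  have hc : lowerSpectralBound C * s ≤ c := lowerSpectralBound_mul_le_re C hx
  have hb : b ^ 2 ≤ euclideanOpNorm (B - Bᵀ) ^ 2 * s ^ 2 / 4 :=
    sq_im_star_dotProduct_mulVec_map_ofReal_le B x
  have hre : (star x ⬝ᵥ ((-(ω : ℂ) ^ 2) • A.map Complex.ofReal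
      + ((ω : ℂ) * Complex.I) • B.map Complex.ofReal - C) *ᵥ x).re
      = -(a * ω ^ 2 + b * ω + c) := by
    rw [sub_mulVec, add_mulVec, smul_mulVec, smul_mulVec, dotProduct_sub, dotProduct_add,
      dotProduct_smul, dotProduct_smul]
    simp only [smul_eq_mul, Complex.sub_re, Complex.add_re, Complex.mul_re, Complex.mul_im,
      Complex.neg_re, Complex.neg_im, Complex.I_re, Complex.I_im, Complex.ofReal_re,
      Complex.ofReal_im, ← Complex.ofReal_pow, a, b, c]
    ring
  rw [hre, neg_lt_zero]
  refine quadratic_pos_of_sq_lt (by nlinarith) ?_ ω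
  calc b ^ 2 ≤ euclideanOpNorm (B - Bᵀ) ^ 2 * s ^ 2 / 4 := hb
    _ < 4 * (lowerSpectralBound (A.map Complex.ofReal) * s) * (lowerSpectralBound C * s) := by
      nlinarith [pow_pos hs 2]
    _ ≤ 4 * a * c := by nlinarith [mul_le_mul ha hc (by positivity) (by nlinarith)]

end FinDim

theorem stmt_8_general (m : ℕ) (A B : Matrix (Fin m) (Fin m) ℝ)
    (C : Matrix (Fin m) (Fin m) ℂ)
    (hA : 0 < lowerSpectralBound (A.map Complex.ofReal))
    (hC : 0 < lowerSpectralBound C)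
    (hB : euclideanOpNorm (B - B.transpose) ^ 2 <
      16 * lowerSpectralBound (A.map Complex.ofReal) * lowerSpectralBound C) :
    ∀ ω : ℝ, IsUnit
      ((-(ω:ℂ) ^ 2) • (A.map Complex.ofReal) +
        ((ω:ℂ) * Complex.I) • (B.map Complex.ofReal) - C) := by
  intro ω
  rw [isUnit_iff_isUnit_det, isUnit_iff_ne_zero]
  intro hdet
  obtain ⟨x, hx, hMx⟩ := exists_mulVec_eq_zero_iff.2 hdet
  have hneg := re_star_dotProduct_mulVec_neg hA hC hB ω hx
  rw [hMx, dotProduct_zero, Complex.zero_re] at hneg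
  exact hneg.false

/-- Under the hypotheses of Lemma B.1 (i), the matrix `−ω² A + iω B − C` is invertible
for every `ω ∈ ℝ`. -/
theorem stmt_8 (m : ℕ) (hm : 1 ≤ m) (A B : Matrix (Fin m) (Fin m) ℝ)
    (C : Matrix (Fin m) (Fin m) ℂ)
    (hA : 0 < lowerSpectralBound (A.map Complex.ofReal))
    (hC : 0 < lowerSpectralBound C)
    (hB : euclideanOpNorm (B - B.transpose) ^ 2 <
      16 * lowerSpectralBound (A.map Complex.ofReal) * lowerSpectralBound C) :
    ∀ ω : ℝ, IsUnit
      ((-(ω:ℂ) ^ 2) • (A.map Complex.ofReal) +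
        ((ω:ℂ) * Complex.I) • (B.map Complex.ofReal) - C) :=
  stmt_8_general m A B C hA hC hB
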